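/- Aggregates solve the conservation law: let n ≥ 1, m_1, …, m_n > 0, T > 0, and let x_1, …, x_n : [0,T] → ℝ be C¹ functions with x_1(t) < ⋯ < x_n(t) for all t, satisfying the aggregate ODE system m_i x_i'(t) = A(d_i(t) + m_i/2) − A(d_i(t) − m_i/2), where d_i(t) = ∑_{j≠i} m_j K'(x_i(t) − x_j(t)). Set S_n(t,x) = ∑_{i=1}^n (m_i/2) e^{−|x−x_i(t)|} and G_n(t,x) = ∑_{j=1}^n m_j K'(x − x_j(t)). Then the measure ρ_n(t) = ∑_{i=1}^n m_i δ_{x_i(t)} solves ∂_t ρ_n + ∂_x(−∂_x A(G_n) + a(G_n) S_n) = 0 in the sense of distributions: for every φ ∈ C_c^∞((0,T)×ℝ), ∑_{i=1}^n m_i ∫_0^T ∂_t φ(t, x_i(t)) dt + ∫_0^T ∫_ℝ [A(G_n(t,x)) ∂_{xx} φ(t,x) + a(G_n(t,x)) S_n(t,x) ∂_x φ(t,x)] dx dt = 0. -/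

import Mathlib

open MeasureTheory

/-- The pointwise derivative `K'(x) = -(1/2) sgn(x) e^{-|x|}` (with `sgn 0 = 0`). -/
noncomputable def Kker' (x : ℝ) : ℝ := -(1/2) * Real.sign x * Real.exp (-|x|)

/-- The antiderivative `A(x) = ∫_0^x a(s) ds`. -/
noncomputable def Aanti (a : ℝ → ℝ) (x : ℝ) : ℝ := ∫ s in (0:ℝ)..x, a s

/-- A test function `φ(t,x)` of class `C_c^∞((0,T) × ℝ)`. -/
def IsTestOn (T : ℝ) (φ : ℝ → ℝ → ℝ) : Prop :=
  ContDiff ℝ (⊤ : ℕ∞) (fun p : ℝ × ℝ => φ p.1 p.2) ∧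
  HasCompactSupport (fun p : ℝ × ℝ => φ p.1 p.2) ∧
  ∀ t x : ℝ, φ t x ≠ 0 → t ∈ Set.Ioo 0 T

lemma Kker'_of_pos {z : ℝ} (hz : 0 < z) : Kker' z = -(1/2) * Real.exp (-z) := by
  unfold Kker'; rw [Real.sign_of_pos hz, abs_of_pos hz]; ring

lemma Kker'_of_neg {z : ℝ} (hz : z < 0) : Kker' z = (1/2) * Real.exp z := by
  unfold Kker'; rw [Real.sign_of_neg hz, abs_of_neg hz]; ring_nf

lemma Aanti_hasDerivAt (a : ℝ → ℝ) (ha : Continuous a) (x : ℝ) :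
    HasDerivAt (Aanti a) (a x) x :=
  (intervalIntegral.integral_hasStrictDerivAt_right
    (ha.intervalIntegrable _ _) (ha.stronglyMeasurableAtFilter _ _) ha.continuousAt).hasDerivAt

lemma Aanti_continuous (a : ℝ → ℝ) (ha : Continuous a) : Continuous (Aanti a) :=
  continuous_iff_continuousAt.mpr fun x => (Aanti_hasDerivAt a ha x).differentiableAt.continuousAt

noncomputable def pEps (k j : ℕ) : ℝ := if j < k then 1 else -1

lemma pEps_sq (k j : ℕ) : pEps k j * pEps k j = 1 := by unfold pEps; split_ifs <;> norm_num

noncomputable def pG {n : ℕ} (m X : Fin n → ℝ) (k : ℕ) (y : ℝ) : ℝ :=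
  ∑ j, m j * (-(pEps k j) / 2) * Real.exp (-(pEps k j * (y - X j)))

noncomputable def pS {n : ℕ} (m X : Fin n → ℝ) (k : ℕ) (y : ℝ) : ℝ :=
  ∑ j, m j / 2 * Real.exp (-(pEps k j * (y - X j)))

lemma pG_continuous {n : ℕ} (m X : Fin n → ℝ) (k : ℕ) : Continuous (pG m X k) := by
  unfold pG; fun_prop

lemma pS_continuous {n : ℕ} (m X : Fin n → ℝ) (k : ℕ) : Continuous (pS m X k) := by
  unfold pS; fun_prop

lemma pG_hasDerivAt {n : ℕ} (m X : Fin n → ℝ) (k : ℕ) (y : ℝ) :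
    HasDerivAt (pG m X k) (pS m X k y) y := by
  unfold pG pS
  apply HasDerivAt.fun_sum
  intro j _
  have h1 : HasDerivAt (fun y : ℝ => -(pEps k j * (y - X j))) (-(pEps k j)) y := by
    simpa using (((hasDerivAt_id y).sub_const (X j)).const_mul (pEps k j)).fun_neg
  have h2 := (h1.exp).const_mul (m j * (-(pEps k j) / 2))
  refine h2.congr_deriv ?_; symm
  calc m j / 2 * Real.exp (-(pEps k ↑j * (y - X j)))
      = m j / 2 * (pEps k ↑j * pEps k ↑j) * Real.exp (-(pEps k ↑j * (y - X j))) := by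
        rw [pEps_sq]; ring
    _ = m j * (-pEps k ↑j / 2) * (Real.exp (-(pEps k ↑j * (y - X j))) * -pEps k ↑j) := by ring

lemma pG_eq {n : ℕ} (m X : Fin n → ℝ) (k : ℕ) (y : ℝ)
    (h1 : ∀ j : Fin n, (j : ℕ) < k → X j < y) (h2 : ∀ j : Fin n, k ≤ (j : ℕ) → y < X j) :
    pG m X k y = ∑ j, m j * Kker' (y - X j) := by
  unfold pG
  refine Finset.sum_congr rfl fun j _ => ?_
  by_cases hj : (j : ℕ) < k
  · rw [Kker'_of_pos (by linarith [h1 j hj] : (0:ℝ) < y - X j)]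
    simp only [pEps, if_pos hj]
    ring_nf
  · rw [Kker'_of_neg (by linarith [h2 j (not_lt.mp hj)] : y - X j < 0)]
    simp only [pEps, if_neg hj]
    ring_nf

lemma pS_eq {n : ℕ} (m X : Fin n → ℝ) (k : ℕ) (y : ℝ)
    (h1 : ∀ j : Fin n, (j : ℕ) < k → X j ≤ y) (h2 : ∀ j : Fin n, k ≤ (j : ℕ) → y ≤ X j) :
    pS m X k y = ∑ i, m i / 2 * Real.exp (-|y - X i|) := by
  unfold pS
  refine Finset.sum_congr rfl fun j _ => ?_
  by_cases hj : (j : ℕ) < k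
  · rw [abs_of_nonneg (by linarith [h1 j hj] : (0:ℝ) ≤ y - X j)]
    simp only [pEps, if_pos hj, one_mul]
  · rw [abs_of_nonpos (by linarith [h2 j (not_lt.mp hj)] : y - X j ≤ 0)]
    simp only [pEps, if_neg hj]
    ring_nf

lemma pG_at {n : ℕ} (m X : Fin n → ℝ) (hX : StrictMono X) (i : Fin n) (k : ℕ)
    (hk : ∀ j : Fin n, j ≠ i → ((j : ℕ) < k ↔ (j : ℕ) < (i : ℕ))) :
    pG m X k (X i) = (∑ j ∈ Finset.univ.erase i, m j * Kker' (X i - X j)) +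
      (if (i : ℕ) < k then -(m i) / 2 else m i / 2) := by
  unfold pG
  rw [← Finset.sum_erase_add _ _ (Finset.mem_univ i)]
  congr 1
  · refine Finset.sum_congr rfl fun j hj => ?_
    have hji : j ≠ i := (Finset.mem_erase.mp hj).1
    by_cases hlt : (j : ℕ) < (i : ℕ)
    · have hXlt : X j < X i := hX (Fin.lt_def.mpr hlt)
      rw [Kker'_of_pos (by linarith : (0:ℝ) < X i - X j)]
      simp only [pEps, if_pos ((hk j hji).mpr hlt)]
      ring_nf
    · have hgt : (i : ℕ) < (j : ℕ) := by
        rcases Nat.lt_or_ge (i : ℕ) (j : ℕ) with h | h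
        · exact h
        · exact absurd (Fin.ext (by omega)) hji
      have hXgt : X i < X j := hX (Fin.lt_def.mpr hgt)
      rw [Kker'_of_neg (by linarith : X i - X j < 0)]
      simp only [pEps, if_neg (fun hc => hlt ((hk j hji).mp hc))]
      ring_nf
  · by_cases hik : (i : ℕ) < k
    · simp only [pEps, if_pos hik, sub_self, mul_zero, neg_zero, Real.exp_zero]
      ring
    · simp only [pEps, if_neg hik, sub_self, mul_zero, neg_zero, Real.exp_zero]
      ring

lemma spatial {n : ℕ} (m : Fin n → ℝ) (X : Fin n → ℝ) (hX : StrictMono X)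
    (a : ℝ → ℝ) (ha : Continuous a) (ψ : ℝ → ℝ)
    (hψ : ContDiff ℝ (⊤ : ℕ∞) ψ) (hcs : HasCompactSupport ψ) :
    (∫ y : ℝ, (Aanti a (∑ j, m j * Kker' (y - X j)) * deriv (deriv ψ) y +
        a (∑ j, m j * Kker' (y - X j)) * (∑ i, m i / 2 * Real.exp (-|y - X i|)) * deriv ψ y))
      = ∑ i, (Aanti a ((∑ j ∈ Finset.univ.erase i, m j * Kker' (X i - X j)) + m i / 2) -
          Aanti a ((∑ j ∈ Finset.univ.erase i, m j * Kker' (X i - X j)) - m i / 2)) *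
          deriv ψ (X i) := by
  -- regularity of ψ
  have hψ' : ContDiff ℝ ((⊤:ℕ∞):WithTop ℕ∞) ψ := hψ.of_le (by exact_mod_cast le_top)
  have hψ1 : Differentiable ℝ ψ := hψ'.differentiable (by simp)
  have hdψ : ContDiff ℝ ((⊤:ℕ∞):WithTop ℕ∞) (deriv ψ) := (contDiff_infty_iff_deriv.mp hψ').2
  have hdψ1 : Differentiable ℝ (deriv ψ) := hdψ.differentiable (by simp)
  have hd2ψc : Continuous (deriv (deriv ψ)) := hdψ.continuous_deriv (by exact_mod_cast le_top)
  have hdψc : Continuous (deriv ψ) := hdψ.continuous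
  -- choice of R
  obtain ⟨r, hr⟩ := hcs.isBounded.subset_closedBall 0
  set R : ℝ := max r (∑ i, |X i|) + 1 with hRdef
  have hsum_nonneg : (0:ℝ) ≤ ∑ i, |X i| := Finset.sum_nonneg fun i _ => abs_nonneg _
  have hR1 : (1:ℝ) ≤ R := by
    have := le_max_right r (∑ i, |X i|); simp only [hRdef]; linarith
  have hψsup : ∀ y : ℝ, R ≤ |y| → y ∉ tsupport ψ := by
    intro y hy hmem
    have := hr hmem
    rw [Metric.mem_closedBall, Real.dist_eq, sub_zero] at this
    have := le_max_left r (∑ i, |X i|)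
    simp only [hRdef] at hy
    linarith
  have hXR : ∀ i : Fin n, |X i| < R := by
    intro i
    have h1 : |X i| ≤ ∑ j, |X j| :=
      Finset.single_le_sum (f := fun j => |X j|) (fun j _ => abs_nonneg _) (Finset.mem_univ i)
    have := le_max_right r (∑ i, |X i|)
    simp only [hRdef]; linarith
  -- vanishing of derivatives outside (-R, R)
  have hder0 : ∀ y : ℝ, y ∉ Set.Ioo (-R) R → deriv ψ y = 0 ∧ deriv (deriv ψ) y = 0 := by
    intro y hy
    have hyR : R ≤ |y| := by
      simp only [Set.mem_Ioo, not_and_or, not_lt] at hy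
      rcases hy with h | h
      · rw [abs_of_nonpos (by linarith)]; linarith
      · rw [abs_of_nonneg (by linarith)]; linarith
    have h1 : y ∉ tsupport ψ := hψsup y hyR
    have h2 : y ∉ tsupport (deriv ψ) := by
      intro hmem
      exact h1 (isClosed_tsupport ψ |>.closure_eq ▸ closure_mono support_deriv_subset hmem)
    constructor
    · exact image_eq_zero_of_notMem_tsupport h2
    · exact image_eq_zero_of_notMem_tsupport
        (fun hmem => h2 ((isClosed_tsupport (deriv ψ)).closure_eq ▸
          closure_mono support_deriv_subset hmem))
  -- the partition points
  set c : ℕ → ℝ := fun k => if hk : 1 ≤ k ∧ k ≤ n then X ⟨k - 1, by omega⟩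
    else if k = 0 then -R else R with hcdef
  have hc0 : c 0 = -R := by simp [hcdef]
  have hcn : c (n+1) = R := by
    have h : ¬(1 ≤ n + 1 ∧ n + 1 ≤ n) := by omega
    simp [hcdef, h]
  have hck : ∀ k : ℕ, 1 ≤ k → k ≤ n → ∀ (h : k - 1 < n), c k = X ⟨k - 1, h⟩ := by
    intro k h1 h2 h
    simp only [hcdef]
    rw [dif_pos ⟨h1, h2⟩]
  have hlt : ∀ k, k ≤ n → c k < c (k+1) := by
    intro k hk
    rcases Nat.eq_zero_or_pos k with rfl | hk0
    · rw [hc0]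
      rcases Nat.eq_zero_or_pos n with rfl | hn0
      · rw [hcn]; linarith
      · rw [hck 1 le_rfl (by omega) (by omega)]
        have := hXR ⟨0, hn0⟩
        rcases abs_lt.mp this with ⟨h1, _⟩
        exact h1
    · rcases Nat.lt_or_ge k n with hkn | hkn
      · rw [hck k hk0 (by omega) (by omega), hck (k+1) (by omega) (by omega) (by omega)]
        exact hX (by simp [Fin.lt_def]; omega)
      · have hkn' : k = n := le_antisymm hk hkn
        subst hkn'
        rw [hck k hk0 le_rfl (by omega), hcn]
        have := hXR ⟨k - 1, by omega⟩
        rcases abs_lt.mp this with ⟨_, h2⟩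
        exact h2
  have hle : ∀ k, k ≤ n + 1 → ∀ j, j ≤ k → c j ≤ c k := by
    intro k
    induction k with
    | zero => intro _ j hj; rw [Nat.le_zero.mp hj]
    | succ k ih =>
      intro hk j hj
      rcases Nat.eq_or_lt_of_le hj with rfl | hj'
      · exact le_rfl
      · exact (ih (by omega) j (by omega)).trans (hlt k (by omega)).le
  -- endpoints of particles
  have hcX : ∀ i : Fin n, c ((i : ℕ) + 1) = X i := by
    intro i
    rw [hck ((i:ℕ)+1) (by omega) (by omega) (by omega)]
    congr 1
  -- the integrands
  set f : ℝ → ℝ := fun y =>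
    Aanti a (∑ j, m j * Kker' (y - X j)) * deriv (deriv ψ) y +
      a (∑ j, m j * Kker' (y - X j)) * (∑ i, m i / 2 * Real.exp (-|y - X i|)) * deriv ψ y
    with hfdef
  set fk : ℕ → ℝ → ℝ := fun k y =>
    Aanti a (pG m X k y) * deriv (deriv ψ) y +
      a (pG m X k y) * pS m X k y * deriv ψ y with hfkdef
  have hfeq : ∀ k, k ≤ n → ∀ y ∈ Set.Ioo (c k) (c (k+1)), f y = fk k y := by
    intro k hk y hy
    have hG : pG m X k y = ∑ j, m j * Kker' (y - X j) := by
      apply pG_eq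
      · intro j hj
        have e : c ((j:ℕ)+1) = X j := hcX j
        have : c ((j:ℕ)+1) ≤ c k := hle k (by omega) ((j:ℕ)+1) (by omega)
        rw [e] at this
        exact lt_of_le_of_lt this hy.1
      · intro j hj
        have e : c ((j:ℕ)+1) = X j := hcX j
        have : c (k+1) ≤ c ((j:ℕ)+1) := hle ((j:ℕ)+1) (by omega) (k+1) (by omega)
        rw [e] at this
        exact lt_of_lt_of_le hy.2 this
    have hS : pS m X k y = ∑ i, m i / 2 * Real.exp (-|y - X i|) := by
      apply pS_eq
      · intro j hj
        have e : c ((j:ℕ)+1) = X j := hcX j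
        have : c ((j:ℕ)+1) ≤ c k := hle k (by omega) ((j:ℕ)+1) (by omega)
        rw [e] at this
        exact le_trans this hy.1.le
      · intro j hj
        have e : c ((j:ℕ)+1) = X j := hcX j
        have : c (k+1) ≤ c ((j:ℕ)+1) := hle ((j:ℕ)+1) (by omega) (k+1) (by omega)
        rw [e] at this
        exact le_trans hy.2.le this
    simp only [hfdef, hfkdef, hG, hS]
  have hAc : Continuous (Aanti a) := Aanti_continuous a ha
  have hfkcont : ∀ k, Continuous (fk k) := by
    intro k
    simp only [hfkdef]
    exact ((hAc.comp (pG_continuous m X k)).mul hd2ψc).add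
      (((ha.comp (pG_continuous m X k)).mul (pS_continuous m X k)).mul hdψc)
  have hint : ∀ k, k ≤ n → IntervalIntegrable f volume (c k) (c (k+1)) := by
    intro k hk
    rw [intervalIntegrable_iff_integrableOn_Ioc_of_le (hlt k hk).le,
        integrableOn_Ioc_iff_integrableOn_Ioo]
    exact (((hfkcont k).integrableOn_Icc).mono_set Set.Ioo_subset_Icc_self).congr_fun
      (fun y hy => (hfeq k hk y hy).symm) measurableSet_Ioo
  have hkey : ∀ k, k ≤ n → ∫ y in (c k)..(c (k+1)), f y =
      Aanti a (pG m X k (c (k+1))) * deriv ψ (c (k+1)) -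
        Aanti a (pG m X k (c k)) * deriv ψ (c k) := by
    intro k hk
    have hle' := (hlt k hk).le
    have e1 : ∫ y in (c k)..(c (k+1)), f y = ∫ y in (c k)..(c (k+1)), fk k y := by
      rw [intervalIntegral.integral_of_le hle', intervalIntegral.integral_of_le hle',
          integral_Ioc_eq_integral_Ioo, integral_Ioc_eq_integral_Ioo]
      exact setIntegral_congr_fun measurableSet_Ioo (hfeq k hk)

    have hu : ∀ y ∈ Set.uIcc (c k) (c (k+1)),
        HasDerivAt (fun y => Aanti a (pG m X k y)) (a (pG m X k y) * pS m X k y) y :=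
      fun y _ => (Aanti_hasDerivAt a ha (pG m X k y)).comp y (pG_hasDerivAt m X k y)
    have hv : ∀ y ∈ Set.uIcc (c k) (c (k+1)),
        HasDerivAt (deriv ψ) (deriv (deriv ψ) y) y :=
      fun y _ => (hdψ1 y).hasDerivAt
    have hu' : IntervalIntegrable (fun y => a (pG m X k y) * pS m X k y) volume (c k) (c (k+1)) :=
      ((ha.comp (pG_continuous m X k)).mul (pS_continuous m X k)).intervalIntegrable _ _
    have hv' : IntervalIntegrable (deriv (deriv ψ)) volume (c k) (c (k+1)) :=
      hd2ψc.intervalIntegrable _ _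
    have ibp := intervalIntegral.integral_mul_deriv_eq_deriv_mul hu hv hu' hv'
    have h1 : IntervalIntegrable (fun y => Aanti a (pG m X k y) * deriv (deriv ψ) y)
        volume (c k) (c (k+1)) :=
      ((hAc.comp (pG_continuous m X k)).mul hd2ψc).intervalIntegrable _ _
    have h2 : IntervalIntegrable (fun y => a (pG m X k y) * pS m X k y * deriv ψ y)
        volume (c k) (c (k+1)) :=
      (((ha.comp (pG_continuous m X k)).mul (pS_continuous m X k)).mul hdψc).intervalIntegrable _ _
    rw [e1]
    simp only [hfkdef]
    rw [intervalIntegral.integral_add h1 h2, ibp]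
    ring
  -- reduce the full-line integral to the interval [-R, R]
  have h0R : deriv ψ (-R) = 0 := (hder0 (-R) (by simp)).1
  have hRR : deriv ψ R = 0 := (hder0 R (by simp)).1
  have hIoc : ∀ y : ℝ, y ∉ Set.Ioc (-R) R → f y = 0 := by
    intro y hy
    have hy' : y ∉ Set.Ioo (-R) R := fun h => hy ⟨h.1, h.2.le⟩
    obtain ⟨e1', e2'⟩ := hder0 y hy'
    simp only [hfdef, e1', e2', mul_zero, add_zero, zero_add]
  have hfull : ∫ y : ℝ, f y = ∑ k ∈ Finset.range (n+1), ∫ y in c k..c (k+1), f y := by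
    rw [intervalIntegral.sum_integral_adjacent_intervals
      (fun k hk => hint k (by omega))]
    rw [hc0, hcn, intervalIntegral.integral_of_le (by linarith : -R ≤ R)]
    exact (setIntegral_eq_integral_of_forall_compl_eq_zero hIoc).symm
  rw [hfull]
  rw [Finset.sum_congr rfl (fun k hk => hkey k (Nat.lt_succ_iff.mp (Finset.mem_range.mp hk)))]
  rw [Finset.sum_sub_distrib, Finset.sum_range_succ, Finset.sum_range_succ']
  rw [hcn, hc0, hRR, h0R, mul_zero, mul_zero, add_zero, add_zero, ← Finset.sum_sub_distrib]
  set H : ℕ → ℝ := fun k => if h : k < n then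
      (Aanti a ((∑ j ∈ Finset.univ.erase (⟨k, h⟩ : Fin n), m j * Kker' (X ⟨k, h⟩ - X j)) +
          m ⟨k, h⟩ / 2) -
        Aanti a ((∑ j ∈ Finset.univ.erase (⟨k, h⟩ : Fin n), m j * Kker' (X ⟨k, h⟩ - X j)) -
          m ⟨k, h⟩ / 2)) * deriv ψ (X ⟨k, h⟩)
    else 0 with hHdef
  have e3 : ∀ k ∈ Finset.range n,
      Aanti a (pG m X k (c (k+1))) * deriv ψ (c (k+1)) -
        Aanti a (pG m X (k+1) (c (k+1))) * deriv ψ (c (k+1)) = H k := by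
    intro k hk
    have hkn := Finset.mem_range.mp hk
    set i : Fin n := ⟨k, hkn⟩ with hidef
    have hci : c (k+1) = X i := hcX i
    have hGl : pG m X k (X i) =
        (∑ j ∈ Finset.univ.erase i, m j * Kker' (X i - X j)) + m i / 2 := by
      rw [pG_at m X hX i k (fun j hj => by simp [hidef]), if_neg (by simp [hidef])]
    have hGr : pG m X (k+1) (X i) =
        (∑ j ∈ Finset.univ.erase i, m j * Kker' (X i - X j)) - m i / 2 := by
      rw [pG_at m X hX i (k+1) (fun j hj => by
          have hjk : (j : ℕ) ≠ k := fun hc => hj (Fin.ext (by simp [hidef, hc]))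
          simp only [hidef]
          omega),
        if_pos (by simp [hidef])]
      ring
    rw [hci, hGl, hGr]
    simp only [hHdef]
    rw [dif_pos hkn, ← hidef]
    ring
  rw [Finset.sum_congr rfl e3, ← Fin.sum_univ_eq_sum_range H n]
  refine Finset.sum_congr rfl fun i _ => ?_
  simp only [hHdef, dif_pos i.isLt, Fin.eta]

lemma slice_hasCompactSupport {φ : ℝ → ℝ → ℝ}
    (h : HasCompactSupport fun p : ℝ × ℝ => φ p.1 p.2) (t : ℝ) :
    HasCompactSupport (φ t) := by
  apply HasCompactSupport.intro (IsCompact.image h continuous_snd)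
  intro y hy
  by_contra hne
  exact hy ⟨(t, y), subset_tsupport _ hne, rfl⟩

/-- Aggregates solve the conservation law: if the ordered positions `x_i(t)` of the
aggregates follow the ODE system `m_i x_i' = A(d_i + m_i/2) - A(d_i - m_i/2)`, then
`ρ_n(t) = ∑ m_i δ_{x_i(t)}` solves `∂_t ρ_n + ∂_x(-∂_x A(G_n) + a(G_n) S_n) = 0` in the
sense of distributions. -/
theorem stmt13 (n : ℕ) (hn : 1 ≤ n) (T : ℝ) (hT : 0 < T)
    (m : Fin n → ℝ) (hm : ∀ i, 0 < m i)
    (x : Fin n → ℝ → ℝ) (hreg : ∀ i, ContDiff ℝ 1 (x i))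
    (horder : ∀ t ∈ Set.Icc (0:ℝ) T, StrictMono fun i => x i t)
    (a : ℝ → ℝ) (ha : Continuous a)
    (d : Fin n → ℝ → ℝ)
    (hd : d = fun i t => ∑ j ∈ Finset.univ.erase i, m j * Kker' (x i t - x j t))
    (hode : ∀ i, ∀ t ∈ Set.Icc (0:ℝ) T,
      m i * deriv (x i) t = Aanti a (d i t + m i / 2) - Aanti a (d i t - m i / 2))
    (Sn Gn : ℝ → ℝ → ℝ)
    (hSn : Sn = fun t y => ∑ i, (m i / 2) * Real.exp (-|y - x i t|))
    (hGn : Gn = fun t y => ∑ j, m j * Kker' (y - x j t)) :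
    ∀ φ : ℝ → ℝ → ℝ, IsTestOn T φ →
      (∑ i, m i * ∫ t in Set.Ioo (0:ℝ) T, deriv (fun s => φ s (x i t)) t) +
        (∫ t in Set.Ioo (0:ℝ) T, ∫ y : ℝ,
          (Aanti a (Gn t y) * deriv (deriv (φ t)) y +
            a (Gn t y) * Sn t y * deriv (φ t) y)) = 0 := by
  intro φ hφ
  obtain ⟨hΦ, hΦc, hΦs⟩ := hφ
  set Φ : ℝ × ℝ → ℝ := fun p => φ p.1 p.2 with hΦdef
  have hΦ' : ContDiff ℝ ((⊤:ℕ∞):WithTop ℕ∞) Φ := hΦ.of_le (by exact_mod_cast le_top)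
  have hΦd : Differentiable ℝ Φ := hΦ'.differentiable (by simp)
  have hFc : Continuous (fderiv ℝ Φ) := hΦ'.continuous_fderiv (by simp)
  have hφt : ∀ t : ℝ, ContDiff ℝ (⊤ : ℕ∞) (φ t) := fun t =>
    hΦ.comp (ContDiff.prodMk contDiff_const contDiff_id)
  have hφtc : ∀ t : ℝ, HasCompactSupport (φ t) := fun t => slice_hasCompactSupport hΦc t
  have hxd : ∀ i, Differentiable ℝ (x i) := fun i => (hreg i).differentiable one_ne_zero
  have hxdc : ∀ i, Continuous (deriv (x i)) := fun i => (hreg i).continuous_deriv le_rfl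
  have hpx : ∀ t y : ℝ, HasDerivAt (φ t) ((fderiv ℝ Φ (t, y)) (0, 1)) y := by
    intro t y
    have hcurve : HasDerivAt (fun y : ℝ => ((t, y) : ℝ × ℝ)) ((0 : ℝ), (1 : ℝ)) y :=
      (hasDerivAt_const y t).prodMk (hasDerivAt_id y)
    exact (hΦd (t, y)).hasFDerivAt.comp_hasDerivAt y hcurve
  have hpt : ∀ (t Y : ℝ), HasDerivAt (fun s => φ s Y) ((fderiv ℝ Φ (t, Y)) (1, 0)) t := by
    intro t Y
    have hcurve : HasDerivAt (fun s : ℝ => ((s, Y) : ℝ × ℝ)) ((1 : ℝ), (0 : ℝ)) t :=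
      (hasDerivAt_id t).prodMk (hasDerivAt_const t Y)
    exact (hΦd (t, Y)).hasFDerivAt.comp_hasDerivAt t hcurve
  have hψi : ∀ (i : Fin n) (t : ℝ), HasDerivAt (fun s => φ s (x i s))
      ((fderiv ℝ Φ (t, x i t)) (1, deriv (x i) t)) t := by
    intro i t
    have hcurve : HasDerivAt (fun s : ℝ => ((s, x i s) : ℝ × ℝ)) ((1 : ℝ), deriv (x i) t) t :=
      (hasDerivAt_id t).prodMk ((hxd i t).hasDerivAt)
    exact (hΦd _).hasFDerivAt.comp_hasDerivAt t hcurve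
  have hlin : ∀ (p : ℝ × ℝ) (v : ℝ), (fderiv ℝ Φ p) (1, v) =
      (fderiv ℝ Φ p) (1, 0) + v * (fderiv ℝ Φ p) (0, 1) := by
    intro p v
    have hv : ((1 : ℝ), v) = ((1 : ℝ), (0 : ℝ)) + v • ((0 : ℝ), (1 : ℝ)) := by
      simp [Prod.ext_iff]
    rw [hv, map_add, (fderiv ℝ Φ p).map_smul, smul_eq_mul]
  have hcont1 : ∀ i : Fin n, Continuous fun t => (fderiv ℝ Φ (t, x i t)) (1, deriv (x i) t) :=
    fun i => (hFc.comp (continuous_id.prodMk (hreg i).continuous)).clm_apply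
      (continuous_const.prodMk (hxdc i))
  have hcont2 : ∀ (i : Fin n) (v : ℝ × ℝ), Continuous fun t => (fderiv ℝ Φ (t, x i t)) v :=
    fun i v => (hFc.comp (continuous_id.prodMk (hreg i).continuous)).clm_apply continuous_const
  have hGn' : ∀ t y : ℝ, Gn t y = ∑ j, m j * Kker' (y - x j t) := fun t y => by rw [hGn]
  have hSn' : ∀ t y : ℝ, Sn t y = ∑ i, m i / 2 * Real.exp (-|y - x i t|) := fun t y => by
    rw [hSn]
  have hd' : ∀ (i : Fin n) (t : ℝ),
      d i t = ∑ j ∈ Finset.univ.erase i, m j * Kker' (x i t - x j t) := fun i t => by rw [hd]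
  simp only [hGn', hSn']
  have hinner : ∀ t ∈ Set.Ioo (0:ℝ) T,
      (∫ y : ℝ, (Aanti a (∑ j, m j * Kker' (y - x j t)) * deriv (deriv (φ t)) y +
        a (∑ j, m j * Kker' (y - x j t)) * (∑ i, m i / 2 * Real.exp (-|y - x i t|)) *
          deriv (φ t) y))
      = ∑ i, m i * deriv (x i) t * deriv (φ t) (x i t) := by
    intro t ht
    rw [spatial m (fun i => x i t) (horder t ⟨ht.1.le, ht.2.le⟩) a ha (φ t) (hφt t) (hφtc t)]
    refine Finset.sum_congr rfl fun i _ => ?_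
    rw [← hd' i t, ← hode i t ⟨ht.1.le, ht.2.le⟩]
  rw [setIntegral_congr_fun measurableSet_Ioo (fun t ht => hinner t ht)]
  have hInt1 : ∀ i : Fin n,
      IntegrableOn (fun t => deriv (fun s => φ s (x i t)) t) (Set.Ioo 0 T) volume := by
    intro i
    have he : (fun t => deriv (fun s => φ s (x i t)) t) =
        fun t => (fderiv ℝ Φ (t, x i t)) (1, 0) := funext fun t => (hpt t (x i t)).deriv
    rw [he]
    exact ((hcont2 i (1, 0)).integrableOn_Icc).mono_set Set.Ioo_subset_Icc_self
  have hInt2 : ∀ i : Fin n,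
      IntegrableOn (fun t => m i * deriv (x i) t * deriv (φ t) (x i t)) (Set.Ioo 0 T) volume := by
    intro i
    have he : (fun t => m i * deriv (x i) t * deriv (φ t) (x i t)) =
        fun t => m i * deriv (x i) t * (fderiv ℝ Φ (t, x i t)) (0, 1) :=
      funext fun t => by rw [(hpx t (x i t)).deriv]
    rw [he]
    exact (((continuous_const.mul (hxdc i)).mul
      (hcont2 i (0, 1))).integrableOn_Icc).mono_set Set.Ioo_subset_Icc_self
  rw [integral_finset_sum _ (fun i _ => hInt2 i), ← Finset.sum_add_distrib]
  apply Finset.sum_eq_zero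
  intro i _
  have hcomb : ∀ t : ℝ, m i * deriv (fun s => φ s (x i t)) t +
      m i * deriv (x i) t * deriv (φ t) (x i t) = m i * deriv (fun s => φ s (x i s)) t := by
    intro t
    rw [(hpt t (x i t)).deriv, (hpx t (x i t)).deriv, (hψi i t).deriv,
      hlin (t, x i t) (deriv (x i) t)]
    ring
  have hstep : m i * (∫ t in Set.Ioo (0:ℝ) T, deriv (fun s => φ s (x i t)) t) +
      (∫ t in Set.Ioo (0:ℝ) T, m i * deriv (x i) t * deriv (φ t) (x i t)) =
      m i * ∫ t in Set.Ioo (0:ℝ) T, deriv (fun s => φ s (x i s)) t := by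
    rw [← integral_const_mul, ← integral_add ((hInt1 i).const_mul (m i)) (hInt2 i)]
    rw [setIntegral_congr_fun measurableSet_Ioo (fun t _ => hcomb t)]
    rw [integral_const_mul]
  rw [hstep]
  have hdiff : ∀ s : ℝ, DifferentiableAt ℝ (fun s => φ s (x i s)) s :=
    fun s => (hψi i s).differentiableAt
  have hderiv_cont : Continuous (deriv fun s => φ s (x i s)) := by
    have he : (deriv fun s => φ s (x i s)) =
        fun t => (fderiv ℝ Φ (t, x i t)) (1, deriv (x i) t) := funext fun t => (hψi i t).deriv
    rw [he]; exact hcont1 i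
  have h0 : φ 0 (x i 0) = 0 := by
    by_contra h
    exact lt_irrefl (0:ℝ) (hΦs 0 (x i 0) h).1
  have hTT : φ T (x i T) = 0 := by
    by_contra h
    exact lt_irrefl T (hΦs T (x i T) h).2
  have hFTC : ∫ t in Set.Ioo (0:ℝ) T, deriv (fun s => φ s (x i s)) t = 0 := by
    rw [← integral_Ioc_eq_integral_Ioo, ← intervalIntegral.integral_of_le hT.le]
    rw [intervalIntegral.integral_deriv_eq_sub (fun s _ => hdiff s)
      (hderiv_cont.intervalIntegrable _ _)]
    simp [h0, hTT]
  rw [hFTC, mul_zero]
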